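/- arXiv:2503.02768 — 2 statements merged into one kernel-verified Lean document; each statement's English description precedes it below -/
import Mathlib

section
/- Truncation of LPOFs is Scott continuous: for any directed set D of LPOFs and any n, sup{trunc(β, n) | β ∈ D} exists and equals trunc(sup D, n). -/
/-! ## Boolean formulae over node variables -/

inductive Form where
  | top : Form
  | bot : Form
  | conj : Form → Form → Form
  | disj : Form → Form → Form
  | neg : Form → Form
  | var : ℕ → Form

def Form.sat (v : ℕ → Bool) : Form → Prop
  | .top => True
  | .bot => False
  | .conj a b => a.sat v ∧ b.sat v
  | .disj a b => a.sat v ∨ b.sat v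
  | .neg a => ¬ a.sat v
  | .var x => v x = true

def Form.vars : Form → Set ℕ
  | .top => ∅
  | .bot => ∅
  | .conj a b => a.vars ∪ b.vars
  | .disj a b => a.vars ∪ b.vars
  | .neg a => a.vars
  | .var x => {x}

def Form.rename (f : ℕ → ℕ) : Form → Form
  | .top => .top
  | .bot => .bot
  | .conj a b => .conj (a.rename f) (b.rename f)
  | .disj a b => .disj (a.rename f) (b.rename f)
  | .neg a => .neg (a.rename f)
  | .var x => .var (f x)

/-! ## Labels: a pointed, finitely preceded dcpo -/

class LabelDCPO (L : Type) extends PartialOrder L, OrderBot L where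
  directedSupExists : ∀ S : Set L, S.Nonempty → DirectedOn (· ≤ ·) S → ∃ b, IsLUB S b
  finitelyPreceded : ∀ l : L, {l' : L | l' < l}.Finite

/-- The level of a node: length of the longest strict chain ending at it. -/
noncomputable def levOf (lt : ℕ → ℕ → Prop) (x : ℕ) : ℕ :=
  sSup {n | ∃ c : ℕ → ℕ, c n = x ∧ ∀ i < n, lt (c i) (c (i + 1))}

/-! ## Labelled partial orders with formulae -/

structure LPOF (L : Type) [LabelDCPO L] where
  N : Set ℕ
  lt : ℕ → ℕ → Prop
  lab : ℕ → L
  form : ℕ → Form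
  lt_mem : ∀ {x y}, lt x y → x ∈ N ∧ y ∈ N
  lt_trans : ∀ {x y z}, lt x y → lt y z → lt x z
  lt_irrefl : ∀ x, ¬ lt x x
  finPred : ∀ x, {y | lt y x}.Finite
  finLevel : ∀ n, {x ∈ N | levOf lt x = n}.Finite
  singleRoot : ∃! r, r ∈ N ∧ ∀ y, ¬ lt y r
  bot_maximal : ∀ x ∈ N, lab x = ⊥ → ∀ y, ¬ lt x y
  form_sat : ∀ x ∈ N, ∃ v, (form x).sat v
  form_free : ∀ x ∈ N, ∀ y ∈ (form x).vars, lt y x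
  form_impl : ∀ {x y}, lt x y → ∀ v, (form y).sat v → (form x).sat v
  lab_junk : ∀ x, x ∉ N → lab x = ⊥
  form_junk : ∀ x, x ∉ N → form x = Form.top

variable {L : Type} [LabelDCPO L]

/-- The set of ⊥-labelled nodes. -/
def LPOF.Bot (α : LPOF L) : Set ℕ := {x ∈ α.N | α.lab x = ⊥}

/-- Strict successors of a set of nodes. -/
def LPOF.succPlus (α : LPOF L) (X : Set ℕ) : Set ℕ := {y | ∃ x ∈ X, α.lt x y}

/-- Immediate successors of a node. -/
def LPOF.succs (α : LPOF L) (x : ℕ) : Set ℕ :=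
  {y | α.lt x y ∧ ¬ ∃ z, α.lt x z ∧ α.lt z y}

/-- The order ⊑ on LPOFs. -/
def LPOF.le (α β : LPOF L) : Prop :=
  α.N ⊆ β.N ∧
  (∀ x ∈ α.N, ∀ y, β.lt y x → y ∈ α.N) ∧
  (∀ x y, α.lt x y ↔ (β.lt x y ∧ x ∈ α.N ∧ y ∈ α.N)) ∧
  (∀ x ∈ α.N, α.lab x ≤ β.lab x) ∧
  (∀ x ∈ α.N, α.form x = β.form x) ∧
  (∀ x ∈ α.N, α.succs x = β.succs x \ β.succPlus α.Bot)

/-! ## Generic suprema w.r.t. a relation -/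

def isUB {X : Type*} (le : X → X → Prop) (D : Set X) (b : X) : Prop :=
  ∀ a ∈ D, le a b

def isSup {X : Type*} (le : X → X → Prop) (D : Set X) (b : X) : Prop :=
  isUB le D b ∧ ∀ c, isUB le D c → le b c

/-! ## Isomorphism and pomsets with formulae -/

def LPOF.iso (α β : LPOF L) : Prop :=
  ∃ f : ℕ → ℕ, Set.BijOn f α.N β.N ∧
    (∀ x ∈ α.N, ∀ y ∈ α.N, (α.lt x y ↔ β.lt (f x) (f y))) ∧
    (∀ x ∈ α.N, β.lab (f x) = α.lab x) ∧
    (∀ x ∈ α.N, β.form (f x) = (α.form x).rename f)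

def isoClass (α : LPOF L) : Set (LPOF L) := {β | α.iso β}

def Pom (L : Type) [LabelDCPO L] : Type := {A : Set (LPOF L) // ∃ α, A = isoClass α}

def pomLe (A B : Pom L) : Prop := ∀ α ∈ A.1, ∃ β ∈ B.1, LPOF.le α β

def PomFinite (A : Pom L) : Prop := ∀ α ∈ A.1, α.N.Finite

/-! ## The singleton ⊥ LPOF and the bottom pomset -/

def botLPOF (x₀ : ℕ) : LPOF L where
  N := {x₀}
  lt _ _ := False
  lab _ := ⊥
  form _ := Form.top
  lt_mem h := h.elim
  lt_trans h _ := h.elim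
  lt_irrefl _ h := h
  finPred _ := Set.finite_empty.subset (by intro y hy; exact hy.elim)
  finLevel _ := (Set.finite_singleton x₀).subset (fun y hy => hy.1)
  singleRoot := ⟨x₀, ⟨rfl, fun _ h => h⟩, fun r hr => hr.1⟩
  bot_maximal _ _ _ _ h := h
  form_sat _ _ := ⟨fun _ => true, by simp [Form.sat]⟩
  form_free _ _ y hy := by simp [Form.vars] at hy
  form_impl h := h.elim
  lab_junk _ _ := rfl
  form_junk _ _ := rfl

def botPom : Pom L := ⟨isoClass (botLPOF 0), ⟨botLPOF 0, rfl⟩⟩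

/-! ## Stuck formulae, extensible nodes, branches (semantically) -/

def stuckSat (α : LPOF L) (v : ℕ → Bool) : Prop :=
  ∃ x ∈ α.N, α.lab x = ⊥ ∧ (α.form x).sat v

def extens (α : LPOF L) : Set ℕ :=
  {x ∈ α.N | ¬ ∀ v, (α.form x).sat v → stuckSat α v}

def branchSat (α : LPOF L) (S : Set ℕ) (v : ℕ → Bool) : Prop :=
  ∀ x ∈ S, (α.form x).sat v

def IsBranch (α : LPOF L) (S : Set ℕ) : Prop :=
  S.Nonempty ∧ S ⊆ extens α ∧
  (∀ v, branchSat α S v → ¬ stuckSat α v) ∧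
  (∀ T, S ⊂ T → T ⊆ extens α → ¬ ∃ v, branchSat α T v)

def brSet (α : LPOF L) : Set ((ℕ → Bool) → Prop) :=
  {p | ∃ S, IsBranch α S ∧ p = branchSat α S}

/-! ## Truncation (relationally) -/

def IsTrunc (α : LPOF L) (n : ℕ) (β : LPOF L) : Prop :=
  β.N = {x ∈ α.N | levOf α.lt x ≤ n} ∧
  (∀ x y, β.lt x y ↔ (α.lt x y ∧ x ∈ β.N ∧ y ∈ β.N)) ∧
  (∀ x ∈ β.N, (levOf α.lt x < n → β.lab x = α.lab x) ∧
    (levOf α.lt x = n → β.lab x = ⊥)) ∧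
  (∀ x ∈ β.N, β.form x = α.form x)

/-! ## Guarded choice (relationally) -/

def IsGuard (x₀ : ℕ) (ℓ : L) (α β γ : LPOF L) : Prop :=
  γ.N = insert x₀ (α.N ∪ β.N) ∧
  (∀ a b, γ.lt a b ↔ (α.lt a b ∨ β.lt a b ∨ (a = x₀ ∧ b ∈ α.N ∪ β.N))) ∧
  γ.lab x₀ = ℓ ∧
  (∀ y ∈ α.N, γ.lab y = α.lab y) ∧
  (∀ y ∈ β.N, γ.lab y = β.lab y) ∧
  γ.form x₀ = Form.top ∧
  (∀ y ∈ α.N, γ.form y = Form.conj (α.form y) (Form.var x₀)) ∧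
  (∀ y ∈ β.N, γ.form y = Form.conj (β.form y) (Form.neg (Form.var x₀)))

def setLe (A B : Set (LPOF L)) : Prop := ∀ α ∈ A, ∃ β ∈ B, LPOF.le α β

def guardSet (ℓ : L) (A B : Set (LPOF L)) : Set (LPOF L) :=
  {γ | ∃ x₀ α β, α ∈ A ∧ β ∈ B ∧ Disjoint α.N β.N ∧ x₀ ∉ α.N ∧ x₀ ∉ β.N ∧
    IsGuard x₀ ℓ α β γ}

/-! ## Sequential composition (relationally) -/

def CopyFn (α β : LPOF L) (f : Set ℕ → LPOF L) : Prop :=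
  ∀ S, IsBranch α S →
    β.iso (f S) ∧ Disjoint (f S).N α.N ∧
    ∀ S', IsBranch α S' → S ≠ S' → Disjoint (f S).N (f S').N

def IsSeq (α β : LPOF L) (f : Set ℕ → LPOF L) (γ : LPOF L) : Prop :=
  (γ.N = α.N ∪ ⋃ S ∈ {S : Set ℕ | IsBranch α S}, (f S).N) ∧
  (∀ a b, γ.lt a b ↔ (α.lt a b ∨ ∃ S, IsBranch α S ∧
    ((f S).lt a b ∨
      (a ∈ α.N ∧ (∀ v, branchSat α S v → (α.form a).sat v) ∧ b ∈ (f S).N)))) ∧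
  (∀ x ∈ α.N, γ.lab x = α.lab x ∧ γ.form x = α.form x) ∧
  (∀ S, IsBranch α S → ∀ x ∈ (f S).N,
    γ.lab x = (f S).lab x ∧
    ∀ v, (γ.form x).sat v ↔ (((f S).form x).sat v ∧ branchSat α S v))

def seqSet (A B : Set (LPOF L)) : Set (LPOF L) :=
  {γ | ∃ α ∈ A, ∃ β ∈ B, ∃ f, CopyFn α β f ∧ IsSeq α β f γ}

/-! ## Way-below and compactness in Pom(L) -/

def wayBelow (A B : Pom L) : Prop :=
  ∀ D : Set (Pom L), D.Nonempty → DirectedOn pomLe D →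
    ∀ S, isSup pomLe D S → pomLe B S → ∃ C ∈ D, pomLe A C

def pomCompact (A : Pom L) : Prop := wayBelow A A

/-!
The supremum `σ` of a directed family `D` lives on the union of the node sets and carries the
pointwise suprema of the labels: restricting `σ` to that union, relabelled by those suprema, gives
an upper bound of `D` below `σ`. Levels are computed inside downward closed parts, so a node has
the same level in every member of `D` as in `σ`; hence the truncations of the members lie below
`trunc(σ, n)` (truncation is monotone) and cover it. For an upper bound `c` of these truncations,
the only delicate clause of `trunc(σ, n) ⊑ c` asks that an immediate successor `y` in `c` which is
new lies above a `⊥`-node. As `y` has finitely many predecessors, some member `δ` of `D` is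
already non-`⊥` at each of them where `σ` is, and the same clause for `trunc(δ, n) ⊑ c` yields
the required `⊥`-node.
-/

lemma chain_mem_of_lower {r : ℕ → ℕ → Prop} {S : Set ℕ} (hS : ∀ a b, r a b → b ∈ S → a ∈ S)
    {c : ℕ → ℕ} {k : ℕ} (hc : ∀ i < k, r (c i) (c (i + 1))) (hk : c k ∈ S) {i : ℕ}
    (hi : i ≤ k) : c i ∈ S := by
  induction hi using Nat.decreasingInduction with
  | self => exact hk
  | of_succ j hj ih => exact hS _ _ (hc j hj) ih

lemma levOf_restrict {r : ℕ → ℕ → Prop} {U : Set ℕ} (hdown : ∀ x ∈ U, ∀ y, r y x → y ∈ U)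
    {x : ℕ} (hx : x ∈ U) : levOf (fun a b => r a b ∧ a ∈ U ∧ b ∈ U) x = levOf r x := by
  unfold levOf
  congr 1
  ext k
  constructor
  · rintro ⟨c, rfl, hc⟩
    exact ⟨c, rfl, fun i hi => (hc i hi).1⟩
  · rintro ⟨c, rfl, hc⟩
    have hmem : ∀ i ≤ k, c i ∈ U := fun i hi =>
      chain_mem_of_lower (fun a b hab hb => hdown b hb a hab) hc hx hi
    exact ⟨c, rfl, fun i hi => ⟨hc i hi, hmem i hi.le, hmem (i + 1) hi⟩⟩

lemma DirectedOn.exists_mem_forall_finset {α ι : Type*} {r : α → α → Prop} {s : Set α}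
    (hs : DirectedOn r s) {P : α → Prop} {Q : ι → α → Prop}
    (hP : ∀ a b, r a b → P a → P b) (hQ : ∀ i a b, r a b → Q i a → Q i b)
    (t : Finset ι) (h₀ : ∃ a ∈ s, P a) (h : ∀ i ∈ t, ∃ a ∈ s, Q i a) :
    ∃ a ∈ s, P a ∧ ∀ i ∈ t, Q i a := by
  classical
  induction t using Finset.induction_on with
  | empty => simpa using h₀
  | insert i t _ ih =>
    obtain ⟨a, has, hPa, hQa⟩ := ih fun j hj => h j (Finset.mem_insert_of_mem hj)
    obtain ⟨b, hbs, hQb⟩ := h i (Finset.mem_insert_self i t)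
    obtain ⟨d, hds, had, hbd⟩ := hs a has b hbs
    refine ⟨d, hds, hP a d had hPa, ?_⟩
    simp only [Finset.mem_insert, forall_eq_or_imp]
    exact ⟨hQ i b d hbd hQb, fun j hj => hQ j a d had (hQa j hj)⟩

namespace LPOF

variable {α : LPOF L}

lemma lt_of_chain {c : ℕ → ℕ} {k : ℕ} (hc : ∀ i < k, α.lt (c i) (c (i + 1))) {i j : ℕ}
    (hij : i < j) (hj : j ≤ k) : α.lt (c i) (c j) := by
  induction j, hij using Nat.le_induction with
  | base => exact hc i hj
  | succ j _ ih => exact α.lt_trans (ih (by omega)) (hc j hj)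

lemma bddAbove_chainLengths (x : ℕ) :
    BddAbove {k | ∃ c : ℕ → ℕ, c k = x ∧ ∀ i < k, α.lt (c i) (c (i + 1))} := by
  refine ⟨(α.finPred x).toFinset.card, ?_⟩
  rintro k ⟨c, rfl, hc⟩
  have hmaps : ∀ i ∈ Finset.range k, c i ∈ (α.finPred (c k)).toFinset := fun i hi => by
    simpa using lt_of_chain hc (Finset.mem_range.mp hi) le_rfl
  have hinj : Set.InjOn c (Finset.range k) := by
    intro i hi j hj hij
    simp only [Finset.coe_range, Set.mem_Iio] at hi hj
    by_contra hne
    rcases Nat.lt_or_gt_of_ne hne with h | h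
    · exact α.lt_irrefl (c j) (by simpa [hij] using lt_of_chain hc h hj.le)
    · exact α.lt_irrefl (c i) (by simpa [hij] using lt_of_chain hc h hi.le)
  simpa using Finset.card_le_card_of_injOn c hmaps hinj

lemma exists_chain_levOf (x : ℕ) :
    ∃ c : ℕ → ℕ, c (levOf α.lt x) = x ∧ ∀ i < levOf α.lt x, α.lt (c i) (c (i + 1)) :=
  Nat.sSup_mem (s := {k | ∃ c : ℕ → ℕ, c k = x ∧ ∀ i < k, α.lt (c i) (c (i + 1))})
    ⟨0, fun _ => x, rfl, fun i hi => absurd hi (Nat.not_lt_zero i)⟩ (bddAbove_chainLengths x)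

lemma le_levOf {c : ℕ → ℕ} {k : ℕ} (hc : ∀ i < k, α.lt (c i) (c (i + 1))) :
    k ≤ levOf α.lt (c k) :=
  le_csSup (bddAbove_chainLengths _) ⟨c, rfl, hc⟩

lemma levOf_lt_levOf {x y : ℕ} (h : α.lt x y) : levOf α.lt x < levOf α.lt y := by
  obtain ⟨c, hcx, hc⟩ := exists_chain_levOf (α := α) x
  set k := levOf α.lt x
  have hext : ∀ i < k + 1, α.lt (Function.update c (k + 1) y i)
      (Function.update c (k + 1) y (i + 1)) := by
    intro i hi
    rcases Nat.lt_succ_iff_lt_or_eq.mp hi with hi | rfl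
    · rw [Function.update_of_ne (by omega), Function.update_of_ne (by omega)]
      exact hc i hi
    · simpa [Function.update_apply, hcx] using h
  simpa using le_levOf hext

lemma levOf_eq_zero {r : ℕ} (hr : ∀ y, ¬ α.lt y r) : levOf α.lt r = 0 := by
  obtain ⟨c, hcr, hc⟩ := exists_chain_levOf (α := α) r
  by_contra hpos
  have := hc (levOf α.lt r - 1) (by omega)
  rw [Nat.sub_add_cancel (Nat.pos_of_ne_zero hpos), hcr] at this
  exact hr _ this

end LPOF

namespace LPOF

structure IsPrefix (A α : LPOF L) : Prop where
  subset : A.N ⊆ α.N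
  mem_of_lt : ∀ x ∈ A.N, ∀ y, α.lt y x → y ∈ A.N
  lt_iff : ∀ x y, A.lt x y ↔ α.lt x y ∧ x ∈ A.N ∧ y ∈ A.N

namespace IsPrefix

variable {A B α β : LPOF L}

lemma levOf_eq (h : A.IsPrefix α) {x : ℕ} (hx : x ∈ A.N) : levOf A.lt x = levOf α.lt x := by
  have hlt : A.lt = fun a b => α.lt a b ∧ a ∈ A.N ∧ b ∈ A.N :=
    funext₂ fun a b => propext (h.lt_iff a b)
  rw [hlt]
  exact levOf_restrict h.mem_of_lt hx

lemma succs_iff (h : A.IsPrefix α) {x y : ℕ} (hx : x ∈ A.N) (hy : y ∈ A.N) :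
    y ∈ A.succs x ↔ y ∈ α.succs x := by
  simp only [succs, Set.mem_ofPred_eq, h.lt_iff]
  constructor
  · rintro ⟨⟨hxy, -⟩, hmin⟩
    refine ⟨hxy, fun ⟨z, hxz, hzy⟩ => hmin ⟨z, ?_, ?_⟩⟩
    · exact ⟨hxz, hx, h.mem_of_lt y hy z hzy⟩
    · exact ⟨hzy, h.mem_of_lt y hy z hzy, hy⟩
  · rintro ⟨hxy, hmin⟩
    exact ⟨⟨hxy, hx, hy⟩, fun ⟨z, hxz, hzy⟩ => hmin ⟨z, hxz.1, hzy.1⟩⟩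

lemma not_lt_of_isRoot (h : A.IsPrefix α) {r : ℕ} (hr : r ∈ A.N) (hmin : ∀ y, ¬ A.lt y r)
    (y : ℕ) : ¬ α.lt y r :=
  fun hy => hmin y ((h.lt_iff y r).2 ⟨hy, h.mem_of_lt r hr y hy, hr⟩)

lemma trans (hAα : A.IsPrefix α) (hαβ : α.IsPrefix β) : A.IsPrefix β where
  subset := hAα.subset.trans hαβ.subset
  mem_of_lt x hx y hy := hAα.mem_of_lt x hx y
    ((hαβ.lt_iff y x).2 ⟨hy, hαβ.mem_of_lt x (hAα.subset hx) y hy, hAα.subset hx⟩)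
  lt_iff x y := by
    rw [hAα.lt_iff, hαβ.lt_iff]
    exact ⟨fun ⟨⟨h, _⟩, hx, hy⟩ => ⟨h, hx, hy⟩,
      fun ⟨h, hx, hy⟩ => ⟨⟨h, hAα.subset hx, hAα.subset hy⟩, hx, hy⟩⟩

lemma of_subset (hA : A.IsPrefix α) (hB : B.IsPrefix α) (hAB : A.N ⊆ B.N) : A.IsPrefix B where
  subset := hAB
  mem_of_lt x hx y hy := hA.mem_of_lt x hx y ((hB.lt_iff y x).1 hy).1
  lt_iff x y := by
    rw [hA.lt_iff, hB.lt_iff]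
    exact ⟨fun ⟨h, hx, hy⟩ => ⟨⟨h, hAB hx, hAB hy⟩, hx, hy⟩, fun ⟨⟨h, _⟩, hx, hy⟩ => ⟨h, hx, hy⟩⟩

lemma of_cover {C : LPOF L}
    (hcov : ∀ x ∈ A.N, ∃ B : LPOF L, B.IsPrefix A ∧ B.IsPrefix C ∧ x ∈ B.N) : A.IsPrefix C where
  subset x hx := by
    obtain ⟨B, -, hBC, hxB⟩ := hcov x hx
    exact hBC.subset hxB
  mem_of_lt x hx y hy := by
    obtain ⟨B, hBA, hBC, hxB⟩ := hcov x hx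
    exact hBA.subset (hBC.mem_of_lt x hxB y hy)
  lt_iff x y := by
    constructor
    · intro hxy
      obtain ⟨B, hBA, hBC, hyB⟩ := hcov y (A.lt_mem hxy).2
      have hxB := hBA.mem_of_lt y hyB x hxy
      exact ⟨((hBC.lt_iff x y).1 ((hBA.lt_iff x y).2 ⟨hxy, hxB, hyB⟩)).1, (A.lt_mem hxy)⟩
    · rintro ⟨hxy, -, hy⟩
      obtain ⟨B, hBA, hBC, hyB⟩ := hcov y hy
      have hxB := hBC.mem_of_lt y hyB x hxy
      exact ((hBA.lt_iff x y).1 ((hBC.lt_iff x y).2 ⟨hxy, hxB, hyB⟩)).1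

end IsPrefix

variable {α β : LPOF L}

lemma le.isPrefix (h : α.le β) : α.IsPrefix β := ⟨h.1, h.2.1, h.2.2.1⟩

lemma le.lab_le_lab (h : α.le β) (x : ℕ) : α.lab x ≤ β.lab x := by
  by_cases hx : x ∈ α.N
  · exact h.2.2.2.1 x hx
  · rw [α.lab_junk x hx]
    exact bot_le

lemma le.form_eq (h : α.le β) {x : ℕ} (hx : x ∈ α.N) : α.form x = β.form x := h.2.2.2.2.1 x hx

lemma le.mem_succPlus_of_notMem (h : α.le β) {x y : ℕ} (hx : x ∈ α.N) (hy : y ∈ β.succs x)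
    (hyα : y ∉ α.N) : y ∈ β.succPlus α.Bot := by
  by_contra hnot
  have : y ∈ α.succs x := by
    rw [h.2.2.2.2.2 x hx]
    exact ⟨hy, hnot⟩
  exact hyα (α.lt_mem this.1).2

lemma le_of_isPrefix (hp : α.IsPrefix β) (hlab : ∀ x ∈ α.N, α.lab x ≤ β.lab x)
    (hform : ∀ x ∈ α.N, α.form x = β.form x)
    (hgrow : ∀ x ∈ α.N, ∀ y ∈ β.succs x, y ∉ α.N → y ∈ β.succPlus α.Bot) : α.le β := by
  refine ⟨hp.subset, hp.mem_of_lt, hp.lt_iff, hlab, hform, fun x hx => ?_⟩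
  ext y
  constructor
  · intro hy
    have hyα := (α.lt_mem hy.1).2
    refine ⟨(hp.succs_iff hx hyα).1 hy, ?_⟩
    rintro ⟨z, ⟨hz, hzbot⟩, hzy⟩
    exact α.bot_maximal z hz hzbot y ((hp.lt_iff z y).2 ⟨hzy, hz, hyα⟩)
  · rintro ⟨hy, hnot⟩
    have hyα : y ∈ α.N := by
      by_contra hyα
      exact hnot (hgrow x hx y hy hyα)
    exact (hp.succs_iff hx hyα).2 hy

open Classical in
noncomputable def restrict (α : LPOF L) (U : Set ℕ) (hU : U ⊆ α.N)
    (hdown : ∀ x ∈ U, ∀ y, α.lt y x → y ∈ U) (hroot : ∃ r ∈ U, ∀ y, ¬ α.lt y r)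
    (ℓ : ℕ → L) (hbot : ∀ x ∈ U, ℓ x = ⊥ → ∀ y ∈ U, ¬ α.lt x y) (hjunk : ∀ x ∉ U, ℓ x = ⊥) :
    LPOF L where
  N := U
  lt x y := α.lt x y ∧ x ∈ U ∧ y ∈ U
  lab := ℓ
  form x := if x ∈ U then α.form x else .top
  lt_mem h := h.2
  lt_trans h h' := ⟨α.lt_trans h.1 h'.1, h.2.1, h'.2.2⟩
  lt_irrefl x h := α.lt_irrefl x h.1
  finPred x := (α.finPred x).subset fun _ h => h.1
  finLevel m := (α.finLevel m).subset fun x ⟨hx, hm⟩ =>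
    ⟨hU hx, by rwa [levOf_restrict hdown hx] at hm⟩
  singleRoot := by
    obtain ⟨r, hr, hmin⟩ := hroot
    obtain ⟨r₀, -, huniq⟩ := α.singleRoot
    refine ⟨r, ⟨hr, fun y hy => hmin y hy.1⟩, fun r' ⟨hr', hmin'⟩ => ?_⟩
    rw [huniq r' ⟨hU hr', fun y hy => hmin' y ⟨hy, hdown r' hr' y hy, hr'⟩⟩,
      huniq r ⟨hU hr, hmin⟩]
  bot_maximal x hx hbx y hy := hbot x hx hbx y hy.2.2 hy.1
  form_sat x hx := by simpa [hx] using α.form_sat x (hU hx)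
  form_free x hx y hy := by
    rw [if_pos hx] at hy
    have hyx := α.form_free x (hU hx) y hy
    exact ⟨hyx, hdown x hx y hyx, hx⟩
  form_impl h v := by simpa [h.2.1, h.2.2] using α.form_impl h.1 v
  lab_junk := hjunk
  form_junk _ hx := if_neg hx

section Restrict

variable {U : Set ℕ} {hU : U ⊆ α.N} {hdown : ∀ x ∈ U, ∀ y, α.lt y x → y ∈ U}
  {hroot : ∃ r ∈ U, ∀ y, ¬ α.lt y r} {ℓ : ℕ → L} {hbot : ∀ x ∈ U, ℓ x = ⊥ → ∀ y ∈ U, ¬ α.lt x y}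
  {hjunk : ∀ x ∉ U, ℓ x = ⊥}

lemma isPrefix_restrict : (α.restrict U hU hdown hroot ℓ hbot hjunk).IsPrefix α :=
  ⟨hU, hdown, fun _ _ => Iff.rfl⟩

lemma form_restrict {x : ℕ} (hx : x ∈ U) :
    (α.restrict U hU hdown hroot ℓ hbot hjunk).form x = α.form x :=
  if_pos hx

end Restrict

end LPOF

namespace IsTrunc

variable {α β A B : LPOF L} {n : ℕ}

lemma mem_iff (h : IsTrunc α n A) {x : ℕ} : x ∈ A.N ↔ x ∈ α.N ∧ levOf α.lt x ≤ n := by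
  rw [h.1]
  rfl

lemma isPrefix (h : IsTrunc α n A) : A.IsPrefix α where
  subset _ hx := (h.mem_iff.1 hx).1
  mem_of_lt _ hx _ hy :=
    h.mem_iff.2 ⟨(α.lt_mem hy).1, ((α.levOf_lt_levOf hy).trans_le (h.mem_iff.1 hx).2).le⟩
  lt_iff := h.2.1

lemma lab_of_lt (h : IsTrunc α n A) {x : ℕ} (hx : x ∈ A.N) (hlt : levOf α.lt x < n) :
    A.lab x = α.lab x :=
  (h.2.2.1 x hx).1 hlt

lemma lab_eq_bot_iff (h : IsTrunc α n A) {x : ℕ} (hx : x ∈ A.N) :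
    A.lab x = ⊥ ↔ levOf α.lt x = n ∨ α.lab x = ⊥ := by
  rcases (h.mem_iff.1 hx).2.lt_or_eq with hlt | heq
  · rw [h.lab_of_lt hx hlt]
    simp [hlt.ne]
  · simp [heq, (h.2.2.1 x hx).2 heq]

lemma form_eq (h : IsTrunc α n A) {x : ℕ} (hx : x ∈ A.N) : A.form x = α.form x := h.2.2.2 x hx

lemma mono (hA : IsTrunc α n A) (hB : IsTrunc β n B)
    (h : α.le β) : A.le B := by
  have hlev : ∀ x ∈ α.N, levOf α.lt x = levOf β.lt x := fun x hx => h.isPrefix.levOf_eq hx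
  have hsub : A.N ⊆ B.N := fun x hx => by
    obtain ⟨hxα, hxn⟩ := hA.mem_iff.1 hx
    exact hB.mem_iff.2 ⟨h.isPrefix.subset hxα, hlev x hxα ▸ hxn⟩
  have hlab_lt : ∀ x ∈ A.N, levOf α.lt x < n → A.lab x = α.lab x ∧ B.lab x = β.lab x :=
    fun x hx hlt => ⟨hA.lab_of_lt hx hlt,
      hB.lab_of_lt (hsub hx) (hlev x (hA.isPrefix.subset hx) ▸ hlt)⟩
  refine LPOF.le_of_isPrefix ((hA.isPrefix.trans h.isPrefix).of_subset hB.isPrefix hsub)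
    (fun x hx => ?_) (fun x hx => ?_) (fun x hx y hy hyA => ?_)
  · rcases (hA.mem_iff.1 hx).2.lt_or_eq with hlt | heq
    · rw [(hlab_lt x hx hlt).1, (hlab_lt x hx hlt).2]
      exact h.lab_le_lab x
    · rw [(hA.lab_eq_bot_iff hx).2 (Or.inl heq)]
      exact bot_le
  · rw [hA.form_eq hx, hB.form_eq (hsub hx), h.form_eq (hA.isPrefix.subset hx)]
  · -- a new node of `B` is new in `β`, hence above a `⊥`-node of `α`, which is also `⊥` in `A`
    have hyB := (B.lt_mem hy.1).2
    have hyα : y ∉ α.N := fun hyα =>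
      hyA (hA.mem_iff.2 ⟨hyα, (hlev y hyα).symm ▸ (hB.mem_iff.1 hyB).2⟩)
    obtain ⟨z, ⟨hzα, hz_bot⟩, hzy⟩ := h.mem_succPlus_of_notMem (hA.isPrefix.subset hx)
      ((hB.isPrefix.succs_iff (hsub hx) hyB).1 hy) hyα
    have hzy_lev : levOf α.lt z < n :=
      hlev z hzα ▸ (β.levOf_lt_levOf hzy).trans_le (hB.mem_iff.1 hyB).2
    have hzA : z ∈ A.N := hA.mem_iff.2 ⟨hzα, hzy_lev.le⟩
    refine ⟨z, ⟨hzA, (hlab_lt z hzA hzy_lev).1.trans hz_bot⟩, ?_⟩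
    exact (hB.isPrefix.lt_iff z y).2 ⟨hzy, hsub hzA, hyB⟩

lemma mem_of_le (hA : IsTrunc α n A) (hB : IsTrunc β n B)
    (h : α.le β) {x : ℕ} (hxα : x ∈ α.N) (hxB : x ∈ B.N) : x ∈ A.N :=
  hA.mem_iff.2 ⟨hxα, (h.isPrefix.levOf_eq hxα).symm ▸ (hB.mem_iff.1 hxB).2⟩

end IsTrunc

lemma LPOF.exists_isTrunc (α : LPOF L) (n : ℕ) : ∃ A, IsTrunc α n A := by
  obtain ⟨r, ⟨hr, hmin⟩, -⟩ := α.singleRoot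
  let U := {x ∈ α.N | levOf α.lt x ≤ n}
  have hdown : ∀ x ∈ U, ∀ y, α.lt y x → y ∈ U := fun x hx y hy =>
    ⟨(α.lt_mem hy).1, ((α.levOf_lt_levOf hy).trans_le hx.2).le⟩
  have hroot : ∃ r ∈ U, ∀ y, ¬ α.lt y r :=
    ⟨r, ⟨hr, by rw [α.levOf_eq_zero hmin]; exact n.zero_le⟩, hmin⟩
  let ℓ x := if levOf α.lt x < n then α.lab x else ⊥
  have hbot : ∀ x ∈ U, ℓ x = ⊥ → ∀ y ∈ U, ¬ α.lt x y := by
    intro x hx hx_bot y hy hxy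
    have hlt : levOf α.lt x < n := (α.levOf_lt_levOf hxy).trans_le hy.2
    simp only [ℓ, if_pos hlt] at hx_bot
    exact α.bot_maximal x hx.1 hx_bot y hxy
  have hjunk : ∀ x ∉ U, ℓ x = ⊥ := by
    intro x hx
    simp only [ℓ]
    split_ifs with hlt
    · exact α.lab_junk x fun hxα => hx ⟨hxα, hlt.le⟩
    · rfl
  refine ⟨α.restrict U (fun _ hx => hx.1) hdown hroot ℓ hbot hjunk, rfl, fun _ _ => Iff.rfl,
    fun x _ => ⟨fun hlt => if_pos hlt, fun heq => if_neg heq.not_lt⟩, fun x hx => if_pos hx⟩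

section Directed

variable {D : Set (LPOF L)}

lemma exists_isUB_mem_iUnion_isLUB_lab (hne : D.Nonempty) (hdir : DirectedOn LPOF.le D) {σ : LPOF L}
    (hσ : isUB LPOF.le D σ) :
    ∃ ρ, isUB LPOF.le D ρ ∧ (∀ x ∈ ρ.N, ∃ β ∈ D, x ∈ β.N) ∧
      ∀ x, IsLUB ((fun β : LPOF L => β.lab x) '' D) (ρ.lab x) := by
  choose ℓ hℓ using fun x => LabelDCPO.directedSupExists _
    (hne.image fun β : LPOF L => β.lab x) (hdir.mono_comp fun _ _ h => h.lab_le_lab x)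
  let U := {x | ∃ β ∈ D, x ∈ β.N}
  have hU : U ⊆ σ.N := fun x ⟨β, hβ, hx⟩ => (hσ β hβ).isPrefix.subset hx
  have hdown : ∀ x ∈ U, ∀ y, σ.lt y x → y ∈ U := fun x ⟨β, hβ, hx⟩ y hy =>
    ⟨β, hβ, (hσ β hβ).isPrefix.mem_of_lt x hx y hy⟩
  have hroot : ∃ r ∈ U, ∀ y, ¬ σ.lt y r := by
    obtain ⟨β, hβ⟩ := hne
    obtain ⟨r, ⟨hr, hmin⟩, -⟩ := β.singleRoot
    exact ⟨r, ⟨β, hβ, hr⟩, (hσ β hβ).isPrefix.not_lt_of_isRoot hr hmin⟩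
  have hbot : ∀ x ∈ U, ℓ x = ⊥ → ∀ y ∈ U, ¬ σ.lt x y := by
    rintro x - hx y ⟨β, hβ, hy⟩ hxy
    have hxβ := (hσ β hβ).isPrefix.mem_of_lt y hy x hxy
    have hβx : β.lab x = ⊥ := le_bot_iff.1 (hx ▸ (hℓ x).1 ⟨β, hβ, rfl⟩)
    exact β.bot_maximal x hxβ hβx y (((hσ β hβ).isPrefix.lt_iff x y).2 ⟨hxy, hxβ, hy⟩)
  have hjunk : ∀ x ∉ U, ℓ x = ⊥ := fun x hx => le_bot_iff.1 <| (hℓ x).2 <| by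
    rintro _ ⟨β, hβ, rfl⟩
    exact (β.lab_junk x fun hxβ => hx ⟨β, hβ, hxβ⟩).le
  let ρ := σ.restrict U hU hdown hroot ℓ hbot hjunk
  refine ⟨ρ, fun β hβ => ?_, fun x hx => hx, hℓ⟩
  have hβρ : β.IsPrefix ρ :=
    (hσ β hβ).isPrefix.of_subset LPOF.isPrefix_restrict fun x hx => ⟨β, hβ, hx⟩
  refine LPOF.le_of_isPrefix hβρ (fun x _ => (hℓ x).1 ⟨β, hβ, rfl⟩)
    (fun x hx => ((hσ β hβ).form_eq hx).trans
      (LPOF.form_restrict (show x ∈ U from ⟨β, hβ, hx⟩)).symm)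
    (fun x hx y hy hyβ => ?_)
  have hyρ := (ρ.lt_mem hy.1).2
  obtain ⟨z, hz, hzy⟩ := (hσ β hβ).mem_succPlus_of_notMem hx
    ((LPOF.isPrefix_restrict.succs_iff (hβρ.subset hx) hyρ).1 hy) hyβ
  exact ⟨z, hz, hzy, hβρ.subset hz.1, hyρ⟩

lemma isSup.exists_mem_of_mem (hne : D.Nonempty) (hdir : DirectedOn LPOF.le D) {σ : LPOF L}
    (hσ : isSup LPOF.le D σ) {x : ℕ} (hx : x ∈ σ.N) : ∃ β ∈ D, x ∈ β.N := by
  obtain ⟨ρ, hρ, hρN, -⟩ := exists_isUB_mem_iUnion_isLUB_lab hne hdir hσ.1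
  exact hρN x ((hσ.2 ρ hρ).isPrefix.subset hx)

lemma isSup.isLUB_lab (hne : D.Nonempty) (hdir : DirectedOn LPOF.le D) {σ : LPOF L}
    (hσ : isSup LPOF.le D σ) (x : ℕ) : IsLUB ((fun β : LPOF L => β.lab x) '' D) (σ.lab x) := by
  obtain ⟨ρ, hρ, -, hρlab⟩ := exists_isUB_mem_iUnion_isLUB_lab hne hdir hσ.1
  refine ⟨?_, fun b hb => ((hσ.2 ρ hρ).lab_le_lab x).trans ((hρlab x).2 hb)⟩
  rintro _ ⟨β, hβ, rfl⟩
  exact (hσ.1 β hβ).lab_le_lab x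

lemma IsTrunc.mem_succPlus_of_isSup (hne : D.Nonempty) (hdir : DirectedOn LPOF.le D)
    {n : ℕ} {σ σn c : LPOF L} (hσ : isSup LPOF.le D σ) (hσn : IsTrunc σ n σn)
    (hc : isUB LPOF.le {β' | ∃ β ∈ D, IsTrunc β n β'} c) {x y : ℕ} (hx : x ∈ σn.N)
    (hy : y ∈ c.succs x) (hyσn : y ∉ σn.N) : y ∈ c.succPlus σn.Bot := by
  by_contra hnot
  -- a member containing `x` that is not `⊥` wherever `σ` is not, on the `c`-predecessors of `y`
  obtain ⟨δ, hδ, hxδ, hδ_lab⟩ := hdir.exists_mem_forall_finset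
    (P := fun δ => x ∈ δ.N) (Q := fun z δ => σ.lab z ≠ ⊥ → δ.lab z ≠ ⊥)
    (fun _ _ h hx => h.isPrefix.subset hx)
    (fun z _ _ h hz hσz hbot => hz hσz (le_bot_iff.1 (hbot ▸ h.lab_le_lab z)))
    (c.finPred y).toFinset (hσ.exists_mem_of_mem hne hdir (hσn.isPrefix.subset hx))
    fun z _ => by
      by_contra! h
      refine (h _ hne.some_mem).1 (le_bot_iff.1 ((hσ.isLUB_lab hne hdir z).2 ?_))
      rintro _ ⟨γ, hγ, rfl⟩
      exact (h γ hγ).2.le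
  obtain ⟨B, hB⟩ := δ.exists_isTrunc n
  have hBc : B.le c := hc B ⟨δ, hδ, hB⟩
  have hBσn : B.le σn := hB.mono hσn (hσ.1 δ hδ)
  obtain ⟨z, ⟨hzB, hzB_bot⟩, hzy⟩ := hBc.mem_succPlus_of_notMem
    (hB.mem_of_le hσn (hσ.1 δ hδ) hxδ hx) hy fun hyB => hyσn (hBσn.isPrefix.subset hyB)
  have hzσn := hBσn.isPrefix.subset hzB
  have hzσn_bot : ¬ (levOf σ.lt z = n ∨ σ.lab z = ⊥) := by
    rw [← hσn.lab_eq_bot_iff hzσn]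
    exact fun h => hnot ⟨z, ⟨hzσn, h⟩, hzy⟩
  have hzδ := hB.isPrefix.subset hzB
  rcases (hB.lab_eq_bot_iff hzB).1 hzB_bot with hz_lev | hz_bot
  · exact hzσn_bot (Or.inl ((hσ.1 δ hδ).isPrefix.levOf_eq hzδ ▸ hz_lev))
  · exact hδ_lab z (by simpa using hzy) (fun h => hzσn_bot (Or.inr h)) hz_bot

lemma IsTrunc.le_of_isSup (hne : D.Nonempty) (hdir : DirectedOn LPOF.le D)
    {n : ℕ} {σ σn c : LPOF L} (hσ : isSup LPOF.le D σ) (hσn : IsTrunc σ n σn)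
    (hc : isUB LPOF.le {β' | ∃ β ∈ D, IsTrunc β n β'} c) : σn.le c := by
  have htrunc : ∀ β ∈ D, ∀ x ∈ β.N, x ∈ σn.N →
      ∃ B, IsTrunc β n B ∧ B.le σn ∧ B.le c ∧ x ∈ B.N := by
    intro β hβ x hxβ hx
    obtain ⟨B, hB⟩ := β.exists_isTrunc n
    exact ⟨B, hB, hB.mono hσn (hσ.1 β hβ), hc B ⟨β, hβ, hB⟩, hB.mem_of_le hσn (hσ.1 β hβ) hxβ hx⟩
  have hcover : ∀ x ∈ σn.N, ∃ B : LPOF L, B.le σn ∧ B.le c ∧ x ∈ B.N := fun x hx => by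
    obtain ⟨β, hβ, hxβ⟩ := hσ.exists_mem_of_mem hne hdir (hσn.isPrefix.subset hx)
    obtain ⟨B, -, hBσn, hBc, hxB⟩ := htrunc β hβ x hxβ hx
    exact ⟨B, hBσn, hBc, hxB⟩
  refine LPOF.le_of_isPrefix (LPOF.IsPrefix.of_cover fun x hx => ?_) (fun x hx => ?_)
    (fun x hx => ?_) fun x hx y hy hyσn => hσn.mem_succPlus_of_isSup hne hdir hσ hc hx hy hyσn
  · obtain ⟨B, hBσn, hBc, hxB⟩ := hcover x hx
    exact ⟨B, hBσn.isPrefix, hBc.isPrefix, hxB⟩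
  · rcases (hσn.mem_iff.1 hx).2.lt_or_eq with hlt | heq
    · rw [hσn.lab_of_lt hx hlt]
      refine (hσ.isLUB_lab hne hdir x).2 ?_
      rintro _ ⟨β, hβ, rfl⟩
      change β.lab x ≤ c.lab x
      by_cases hxβ : x ∈ β.N
      · obtain ⟨B, hB, -, hBc, hxB⟩ := htrunc β hβ x hxβ hx
        rw [← hB.lab_of_lt hxB ((hσ.1 β hβ).isPrefix.levOf_eq hxβ ▸ hlt)]
        exact hBc.lab_le_lab x
      · rw [β.lab_junk x hxβ]
        exact bot_le
    · rw [(hσn.lab_eq_bot_iff hx).2 (Or.inl heq)]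
      exact bot_le
  · obtain ⟨B, hBσn, hBc, hxB⟩ := hcover x hx
    exact (hBσn.form_eq hxB).symm.trans (hBc.form_eq hxB)

end Directed

/-- truncation is Scott continuous: the truncation of the supremum
of a directed set is the supremum of the truncations. -/
theorem stmt9 {L : Type} [LabelDCPO L] (D : Set (LPOF L))
    (hne : D.Nonempty) (hdir : DirectedOn LPOF.le D)
    (n : ℕ) (σ σn : LPOF L)
    (hσ : isSup LPOF.le D σ) (hσn : IsTrunc σ n σn) :
    isSup LPOF.le {β' | ∃ β ∈ D, IsTrunc β n β'} σn :=
  ⟨fun _ ⟨β, hβ, hβ'⟩ => hβ'.mono hσn (hσ.1 β hβ),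
    fun _ hc => hσn.le_of_isSup hne hdir hσ hc⟩
end

section
/- If α ⊑ β for LPOFs α, β, then the stuck formula of β implies the stuck formula of α, i.e., stuck_β ⇒ stuck_α. -/
variable {L : Type} [LabelDCPO L]

/-! A `⊥`-node of `β` that already belongs to `α` is a `⊥`-node of `α` (labels only grow)
with the same formula. Any other node `x` of `β` lies strictly above a `⊥`-node `w` of `α`:
by well-founded induction, an immediate predecessor of `x` is either new, or a node of `α`
whose successors outside `α` all lie above `α`'s `⊥`-nodes. Formulae strengthen upward, so
`φ_β(x)` implies `φ_α(w)`. -/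

namespace LPOF

instance isStrictOrder_lt (α : LPOF L) : IsStrictOrder ℕ α.lt where
  irrefl := α.lt_irrefl
  trans _ _ _ := α.lt_trans

theorem wellFounded_lt (α : LPOF L) : WellFounded α.lt := by
  refine ⟨fun x => (List.TFAE.out Set.WellFoundedOn.acc_iff_wellFoundedOn 0 2).2 ?_⟩
  rw [Relation.transGen_eq_self]
  exact (α.finPred x).wellFoundedOn

theorem exists_mem_succs_of_lt (α : LPOF L) {p y : ℕ} (hpy : α.lt p y) :
    ∃ z, y ∈ α.succs z := by
  obtain ⟨z, hzy, hmax⟩ := (Set.wellFoundedOn_iff.1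
    ((α.finPred y).wellFoundedOn (r := Function.swap α.lt))).has_min {z | α.lt z y} ⟨p, hpy⟩
  exact ⟨z, hzy, fun ⟨w, hzw, hwy⟩ => hmax w hwy ⟨hzw, hwy, hzy⟩⟩

namespace le

variable {α β : LPOF L}

theorem form_eq_s10 (h : α.le β) {x : ℕ} (hx : x ∈ α.N) : α.form x = β.form x :=
  h.2.2.2.2.1 x hx

theorem lab_eq_bot (h : α.le β) {x : ℕ} (hx : x ∈ α.N) (hbot : β.lab x = ⊥) : α.lab x = ⊥ :=
  le_bot_iff.1 (hbot ▸ h.2.2.2.1 x hx)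

/-- The root of `α` has no predecessor in `β`, so it is the root of `β`. -/
theorem exists_lt_of_notMem (h : α.le β) {y : ℕ} (hy : y ∈ β.N) (hyα : y ∉ α.N) :
    ∃ p, β.lt p y := by
  obtain ⟨r, ⟨hrα, hr_min⟩, -⟩ := α.singleRoot
  obtain ⟨rβ, -, huniq⟩ := β.singleRoot
  have hr_minβ : ∀ p, ¬ β.lt p r := fun p hp =>
    hr_min p ((h.2.2.1 p r).2 ⟨hp, h.2.1 r hrα p hp, hrα⟩)
  by_contra! hy_min
  exact hyα (huniq y ⟨hy, hy_min⟩ ▸ (huniq r ⟨h.1 hrα, hr_minβ⟩).symm ▸ hrα)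

theorem exists_bot_lt_of_mem_succs (h : α.le β) {y z : ℕ} (hz : z ∈ α.N)
    (hzy : y ∈ β.succs z) (hyα : y ∉ α.N) : ∃ w ∈ α.Bot, β.lt w y := by
  by_contra hy
  have : y ∈ α.succs z := (h.2.2.2.2.2 z hz).symm ▸ ⟨hzy, hy⟩
  exact hyα (α.lt_mem this.1).2

theorem exists_bot_lt (h : α.le β) {x : ℕ} (hx : x ∈ β.N) (hxα : x ∉ α.N) :
    ∃ w ∈ α.Bot, β.lt w x := by
  induction x using β.wellFounded_lt.induction with
  | _ x ih =>
    obtain ⟨p, hpx⟩ := h.exists_lt_of_notMem hx hxα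
    obtain ⟨z, hzx, hz_imm⟩ := β.exists_mem_succs_of_lt hpx
    by_cases hzα : z ∈ α.N
    · exact h.exists_bot_lt_of_mem_succs hzα ⟨hzx, hz_imm⟩ hxα
    · obtain ⟨w, hw, hwz⟩ := ih z hzx (β.lt_mem hzx).1 hzα
      exact ⟨w, hw, β.lt_trans hwz hzx⟩

end le

end LPOF

/-- if α ⊑ β, then stuck_β ⇒ stuck_α (semantically). -/
theorem stmt10 {L : Type} [LabelDCPO L] (α β : LPOF L) (h : LPOF.le α β) :
    ∀ v, stuckSat β v → stuckSat α v := by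
  rintro v ⟨x, hx, hbot, hsat⟩
  by_cases hxα : x ∈ α.N
  · exact ⟨x, hxα, h.lab_eq_bot hxα hbot, h.form_eq_s10 hxα ▸ hsat⟩
  · obtain ⟨w, ⟨hw, hwbot⟩, hwx⟩ := h.exists_bot_lt hx hxα
    exact ⟨w, hw, hwbot, h.form_eq_s10 hw ▸ β.form_impl hwx v hsat⟩
end
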